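/- arXiv:2401.04806 — 7 statements merged into one kernel-verified Lean document; each statement's English description precedes it below -/
import Mathlib

section
/- Let X be a set, α a real number, and φ₁, φ₂ : X → ℝ two functions. Then φ₁ and φ₂ have the intersection property on X at level α (i.e., for every t ∈ [0,1], either {x : t·φ₁(x)+(1-t)·φ₂(x) < α} ∩ {x : φ₁(x) < α} = ∅ or {x : t·φ₁(x)+(1-t)·φ₂(x) < α} ∩ {x : φ₂(x) < α} = ∅) if and only if there exists t₀ ∈ [0,1] such that t₀·φ₁(x) + (1-t₀)·φ₂(x) ≥ α for all x ∈ X. -/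
/-- The intersection property of two real-valued functions at level `α`. -/
def IntersectionProperty {X : Type*} (φ₁ φ₂ : X → ℝ) (α : ℝ) : Prop :=
  ∀ t ∈ Set.Icc (0:ℝ) 1,
    ({x | t * φ₁ x + (1 - t) * φ₂ x < α} ∩ {x | φ₁ x < α} = ∅) ∨
    ({x | t * φ₁ x + (1 - t) * φ₂ x < α} ∩ {x | φ₂ x < α} = ∅)

theorem intersection_property_iff_exists_convex_combination_ge
    {X : Type*} [Nonempty X] (φ₁ φ₂ : X → ℝ) (α : ℝ) :
    IntersectionProperty φ₁ φ₂ α ↔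
      ∃ t₀ ∈ Set.Icc (0:ℝ) 1, ∀ x : X, α ≤ t₀ * φ₁ x + (1 - t₀) * φ₂ x := by
  constructor
  · intro h
    -- rephrase the hypothesis
    have key : ∀ t ∈ Set.Icc (0:ℝ) 1,
        (∀ y, ¬(t * φ₁ y + (1 - t) * φ₂ y < α ∧ φ₁ y < α)) ∨
        (∀ y, ¬(t * φ₁ y + (1 - t) * φ₂ y < α ∧ φ₂ y < α)) := by
      intro t ht
      rcases h t ht with h1 | h1
      · left; intro y hy
        have hmem : y ∈ ({x | t * φ₁ x + (1 - t) * φ₂ x < α} ∩ {x | φ₁ x < α}) := ⟨hy.1, hy.2⟩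
        rw [h1] at hmem; exact hmem
      · right; intro y hy
        have hmem : y ∈ ({x | t * φ₁ x + (1 - t) * φ₂ x < α} ∩ {x | φ₂ x < α}) := ⟨hy.1, hy.2⟩
        rw [h1] at hmem; exact hmem
    by_cases h0 : ∀ x, α ≤ φ₂ x
    · exact ⟨0, ⟨le_refl 0, zero_le_one⟩, fun x => by simpa using h0 x⟩
    · push_neg at h0
      obtain ⟨x₀, hx₀⟩ := h0
      set B : Set ℝ := {t | t ∈ Set.Icc (0:ℝ) 1 ∧
        ∃ x, t * φ₁ x + (1 - t) * φ₂ x < α ∧ φ₂ x < α} with hBdef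
      have h0B : (0:ℝ) ∈ B := ⟨⟨le_refl 0, zero_le_one⟩, x₀, by simpa using hx₀, hx₀⟩
      have hBne : B.Nonempty := ⟨0, h0B⟩
      have hBbdd : BddAbove B := ⟨1, fun t ht => ht.1.2⟩
      set t₀ := sSup B with ht₀def
      have ht₀0 : 0 ≤ t₀ := le_csSup hBbdd h0B
      have ht₀1 : t₀ ≤ 1 := csSup_le hBne (fun t ht => ht.1.2)
      refine ⟨t₀, ⟨ht₀0, ht₀1⟩, ?_⟩
      by_contra hc
      push_neg at hc
      obtain ⟨x, hx⟩ := hc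
      have hmin : φ₁ x < α ∨ φ₂ x < α := by
        by_contra hcc
        push_neg at hcc
        nlinarith [hcc.1, hcc.2, ht₀0, ht₀1]
      set ε := (α - (t₀ * φ₁ x + (1 - t₀) * φ₂ x)) / (|φ₁ x - φ₂ x| + 1) with hεdef
      have hεpos : 0 < ε := div_pos (by linarith) (by positivity)
      have hclose : ∀ s : ℝ, |s - t₀| < ε → s * φ₁ x + (1 - s) * φ₂ x < α := by
        intro s hs
        have habs : |s - t₀| * |φ₁ x - φ₂ x| < α - (t₀ * φ₁ x + (1 - t₀) * φ₂ x) := by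
          have h1 : |s - t₀| * |φ₁ x - φ₂ x| < ε * (|φ₁ x - φ₂ x| + 1) := by
            nlinarith [abs_nonneg (φ₁ x - φ₂ x), abs_nonneg (s - t₀)]
          have h2 : ε * (|φ₁ x - φ₂ x| + 1) = α - (t₀ * φ₁ x + (1 - t₀) * φ₂ x) := by
            rw [hεdef]; field_simp
          linarith
        have hid : s * φ₁ x + (1 - s) * φ₂ x - (t₀ * φ₁ x + (1 - t₀) * φ₂ x)
             = (s - t₀) * (φ₁ x - φ₂ x) := by ring
        have h2 : (s - t₀) * (φ₁ x - φ₂ x) ≤ |s - t₀| * |φ₁ x - φ₂ x| := by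
          calc (s - t₀) * (φ₁ x - φ₂ x) ≤ |(s - t₀) * (φ₁ x - φ₂ x)| := le_abs_self _
            _ = |s - t₀| * |φ₁ x - φ₂ x| := abs_mul _ _
        linarith
      rcases hmin with h1 | h2
      · rcases key t₀ ⟨ht₀0, ht₀1⟩ with hk | hk
        · exact hk x ⟨hx, h1⟩
        · obtain ⟨b, hbB, hbgt⟩ := exists_lt_of_lt_csSup hBne (by linarith : t₀ - ε < sSup B)
          have hble : b ≤ t₀ := le_csSup hBbdd hbB
          obtain ⟨hbIcc, y, hy1, hy2⟩ := hbB
          rcases key b hbIcc with hk2 | hk2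
          · refine hk2 x ⟨hclose b ?_, h1⟩
            rw [abs_sub_lt_iff]; constructor <;> linarith
          · exact hk2 y ⟨hy1, hy2⟩
      · by_cases ht1 : t₀ = 1
        · rw [ht1] at hx
          have h1 : φ₁ x < α := by linarith
          rcases key 1 ⟨zero_le_one, le_refl 1⟩ with hk | hk
          · exact hk x ⟨by linarith, h1⟩
          · exact hk x ⟨by linarith, h2⟩
        · have ht₀lt : t₀ < 1 := lt_of_le_of_ne ht₀1 ht1
          set s := min (t₀ + ε/2) 1 with hsdef
          have hsgt : t₀ < s := lt_min (by linarith) ht₀lt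
          have hs1 : s ≤ 1 := min_le_right _ _
          have hs2 : s ≤ t₀ + ε/2 := min_le_left _ _
          have hsB : s ∈ B := by
            refine ⟨⟨by linarith, hs1⟩, x, hclose s ?_, h2⟩
            rw [abs_sub_lt_iff]; constructor <;> linarith
          have : s ≤ t₀ := le_csSup hBbdd hsB
          linarith
  · rintro ⟨t₀, ⟨ht0, ht1⟩, hge⟩
    intro t ht
    obtain ⟨ht0', ht1'⟩ := ht
    by_cases hcase : t ≤ t₀
    · left
      rw [Set.eq_empty_iff_forall_notMem]
      rintro y ⟨hy1, hy2⟩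
      simp only [Set.mem_setOf_eq] at hy1 hy2
      have hg := hge y
      rcases eq_or_lt_of_le ht1 with heq | hlt
      · rw [heq] at hg; linarith
      · nlinarith [mul_nonneg (sub_nonneg.2 hcase) (sub_pos.2 hy2).le,
          mul_pos (sub_pos.2 hlt) (sub_pos.2 hy1),
          mul_nonneg (by linarith : (0:ℝ) ≤ 1 - t)
            (by linarith : (0:ℝ) ≤ t₀ * φ₁ y + (1 - t₀) * φ₂ y - α)]
    · right
      push_neg at hcase
      rw [Set.eq_empty_iff_forall_notMem]
      rintro y ⟨hy1, hy2⟩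
      simp only [Set.mem_setOf_eq] at hy1 hy2
      have hg := hge y
      rcases eq_or_lt_of_le ht0 with heq | hlt
      · rw [← heq] at hg; linarith
      · nlinarith [mul_nonneg (sub_nonneg.2 hcase.le) (sub_pos.2 hy2).le,
          mul_pos hlt (sub_pos.2 hy1),
          mul_nonneg ht0' (by linarith : (0:ℝ) ≤ t₀ * φ₁ y + (1 - t₀) * φ₂ y - α)]
end

section
/- Let X be a nonempty set, Z a convex subset of a real vector space, Φ a class of real-valued elementary functions on X, and a : X × Z → [-∞,+∞] such that a(x,·) is concave on Z for every x ∈ X and a(·,z) is Φ-convex on X for every z ∈ Z. If for every real α < inf_{x∈X} sup_{z∈Z} a(x,z) there exist z₁, z₂ ∈ Z, φ₁ ∈ supp_Φ a(·,z₁), φ₂ ∈ supp_Φ a(·,z₂), and t₀ ∈ [0,1] with t₀φ₁(x) + (1-t₀)φ₂(x) ≥ α for all x ∈ X, then sup_{z∈Z} inf_{x∈X} a(x,z) = inf_{x∈X} sup_{z∈Z} a(x,z). -/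
open scoped BigOperators

/-- `f : X → EReal` is Φ-convex: it equals the pointwise supremum of its Φ-minorants. -/
def PhiConvex {X : Type*} (Φ : Set (X → ℝ)) (f : X → EReal) : Prop :=
  ∀ x : X, f x = ⨆ φ : {φ : X → ℝ // φ ∈ Φ ∧ ∀ x', ((φ x' : EReal) ≤ f x')}, ((φ.1 x : EReal))

theorem minimax_of_intersection_property
    {X : Type*} [Nonempty X] {U : Type*} [AddCommGroup U] [Module ℝ U]
    (Z : Set U) (hZ : Convex ℝ Z) (hZne : Z.Nonempty)
    (Φ : Set (X → ℝ)) (a : X → U → EReal)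
    (hconc : ∀ x : X, ∀ z₁ ∈ Z, ∀ z₂ ∈ Z, ∀ t ∈ Set.Icc (0:ℝ) 1,
      (t : EReal) * a x z₁ + ((1 - t : ℝ) : EReal) * a x z₂ ≤ a x (t • z₁ + (1 - t) • z₂))
    (hconv : ∀ z ∈ Z, PhiConvex Φ (fun x => a x z))
    (hint : ∀ α : ℝ, (α : EReal) < ⨅ x : X, ⨆ z ∈ Z, a x z →
      ∃ z₁ ∈ Z, ∃ z₂ ∈ Z, ∃ φ₁ ∈ Φ, ∃ φ₂ ∈ Φ,
        (∀ x, ((φ₁ x : EReal) ≤ a x z₁)) ∧ (∀ x, ((φ₂ x : EReal) ≤ a x z₂)) ∧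
        ∃ t₀ ∈ Set.Icc (0:ℝ) 1, ∀ x : X, α ≤ t₀ * φ₁ x + (1 - t₀) * φ₂ x) :
    (⨆ z ∈ Z, ⨅ x : X, a x z) = ⨅ x : X, ⨆ z ∈ Z, a x z := by
  apply le_antisymm
  · -- weak duality
    refine iSup₂_le fun z hz => le_iInf fun x => ?_
    exact le_trans (iInf_le _ x) (le_iSup₂ (f := fun z _ => a x z) z hz)
  · rw [← EReal.ge_of_forall_gt_iff_ge]
    intro α hα
    obtain ⟨z₁, hz₁, z₂, hz₂, φ₁, hφ₁, φ₂, hφ₂, hm₁, hm₂, t₀, ht₀, hge⟩ := hint α hα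
    set z : U := t₀ • z₁ + (1 - t₀) • z₂ with hzdef
    have hzZ : z ∈ Z := hZ hz₁ hz₂ ht₀.1 (by linarith [ht₀.2]) (by ring)
    have key : ∀ x : X, (α : EReal) ≤ a x z := by
      intro x
      have h1 : (t₀ : EReal) * (φ₁ x : EReal) ≤ (t₀ : EReal) * a x z₁ :=
        mul_le_mul_of_nonneg_left (hm₁ x) (by exact_mod_cast ht₀.1)
      have h2 : ((1 - t₀ : ℝ) : EReal) * (φ₂ x : EReal) ≤ ((1 - t₀ : ℝ) : EReal) * a x z₂ :=
        mul_le_mul_of_nonneg_left (hm₂ x) (by exact_mod_cast (by linarith [ht₀.2] : (0:ℝ) ≤ 1 - t₀))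
      calc (α : EReal) ≤ ((t₀ * φ₁ x + (1 - t₀) * φ₂ x : ℝ) : EReal) := by
            exact_mod_cast hge x
        _ = (t₀ : EReal) * (φ₁ x : EReal) + ((1 - t₀ : ℝ) : EReal) * (φ₂ x : EReal) := by
            push_cast; rfl
        _ ≤ (t₀ : EReal) * a x z₁ + ((1 - t₀ : ℝ) : EReal) * a x z₂ := add_le_add h1 h2
        _ ≤ a x z := hconc x z₁ hz₁ z₂ hz₂ t₀ ht₀
    calc (α : EReal) ≤ ⨅ x : X, a x z := le_iInf key
      _ ≤ ⨆ z ∈ Z, ⨅ x : X, a x z := le_iSup₂ (f := fun z _ => ⨅ x, a x z) z hzZ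
end

section
/- Let X, Y be sets, Ψ a class of real-valued functions on Y, y₀ ∈ Y, and p : X × Y → (-∞,+∞] with p(x,·) Ψ-convex on Y for every x ∈ X. Define V(y) := inf_{x∈X} p(x,y) and L(x,ψ) := ψ(y₀) - p*_x(ψ). Then sup_{ψ∈Ψ} inf_{x∈X} L(x,ψ) = V**_Ψ(y₀), where V**_Ψ is the second Ψ-conjugate of V. Consequently, the zero duality gap inf_{x∈X} p(x,y₀) = sup_{ψ∈Ψ} inf_{x∈X} L(x,ψ) holds if and only if V(y₀) = V**_Ψ(y₀). -/
/-- The Lagrangian `L(x,ψ) = ψ(y₀) - p*_x(ψ)` associated with a perturbation function `p`. -/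
noncomputable def Lagrangian {X Y : Type*} (p : X → Y → EReal) (y₀ : Y) (x : X) (ψ : Y → ℝ) :
    EReal :=
  (ψ y₀ : EReal) - ⨆ y : Y, ((ψ y : EReal) - p x y)

/-- The optimal value function `V(y) = inf_x p(x,y)`. -/
noncomputable def optVal {X Y : Type*} (p : X → Y → EReal) (y : Y) : EReal :=
  ⨅ x : X, p x y

/-- The Ψ-conjugate of a function `V : Y → EReal`. -/
noncomputable def conj {Y : Type*} (V : Y → EReal) (ψ : Y → ℝ) : EReal :=
  ⨆ y : Y, ((ψ y : EReal) - V y)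

/-- The second Ψ-conjugate of `V`. -/
noncomputable def biconj {Y : Type*} (Ψ : Set (Y → ℝ)) (V : Y → EReal) (y : Y) : EReal :=
  ⨆ ψ ∈ Ψ, ((ψ y : EReal) - conj V ψ)

lemma coe_sub_iInf' {ι : Sort*} [Nonempty ι] (r : ℝ) (a : ι → EReal) :
    (r : EReal) - ⨅ i, a i = ⨆ i, ((r : EReal) - a i) := by
  refine le_antisymm ?_ (iSup_le fun i => EReal.sub_le_sub le_rfl (iInf_le a i))
  rw [← EReal.ge_of_forall_gt_iff_ge]
  intro z hz
  have h1 : (⨅ i, a i) < (r : EReal) - (z : EReal) := by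
    rw [EReal.lt_sub_iff_add_lt (by simp) (by simp)]
    rw [EReal.lt_sub_iff_add_lt (by simp) (by simp)] at hz
    rwa [add_comm]
  obtain ⟨i, hi⟩ := iInf_lt_iff.1 h1
  have : (z : EReal) ≤ (r : EReal) - a i := by
    calc (z : EReal) = (r : EReal) - ((r - z : ℝ) : EReal) := by norm_cast; ring
    _ ≤ (r : EReal) - a i := EReal.sub_le_sub le_rfl (by push_cast; exact hi.le)
  exact this.trans (le_iSup (fun i => (r : EReal) - a i) i)

lemma coe_sub_iSup' {ι : Sort*} [Nonempty ι] (r : ℝ) (a : ι → EReal) :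
    (r : EReal) - ⨆ i, a i = ⨅ i, ((r : EReal) - a i) := by
  refine le_antisymm (le_iInf fun i => EReal.sub_le_sub le_rfl (le_iSup a i)) ?_
  rw [← EReal.le_of_forall_lt_iff_le]
  intro z hz
  have h1 : (r : EReal) - (z : EReal) < ⨆ i, a i := by
    rw [EReal.sub_lt_iff (by simp) (by simp)]
    rw [EReal.sub_lt_iff (by simp) (by simp)] at hz
    rwa [add_comm]
  obtain ⟨i, hi⟩ := lt_iSup_iff.1 h1
  have : (r : EReal) - a i ≤ (z : EReal) := by
    calc (r : EReal) - a i ≤ (r : EReal) - ((r - z : ℝ) : EReal) :=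
          EReal.sub_le_sub le_rfl (by push_cast; exact hi.le)
    _ = (z : EReal) := by norm_cast; ring
  exact (iInf_le _ i).trans this

theorem dual_value_eq_biconjugate_and_zero_gap_iff
    {X Y : Type*} [Nonempty X] [Nonempty Y] (Ψ : Set (Y → ℝ)) (p : X → Y → EReal) (y₀ : Y)
    (hconv : ∀ x : X, ∀ y : Y,
      p x y = ⨆ ψ : {ψ : Y → ℝ // ψ ∈ Ψ ∧ ∀ y', ((ψ y' : EReal) ≤ p x y')}, ((ψ.1 y : EReal))) :
    (⨆ ψ ∈ Ψ, ⨅ x : X, Lagrangian p y₀ x ψ) = biconj Ψ (optVal p) y₀ ∧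
    ((⨅ x : X, p x y₀) = (⨆ ψ ∈ Ψ, ⨅ x : X, Lagrangian p y₀ x ψ) ↔
      optVal p y₀ = biconj Ψ (optVal p) y₀) := by
  have key : ∀ ψ : Y → ℝ, (⨅ x : X, Lagrangian p y₀ x ψ) = (ψ y₀ : EReal) - conj (optVal p) ψ := by
    intro ψ
    unfold Lagrangian conj optVal
    rw [← coe_sub_iSup' (ψ y₀) (fun x => ⨆ y : Y, ((ψ y : EReal) - p x y))]
    congr 1
    rw [iSup_comm]
    exact iSup_congr fun y => (coe_sub_iInf' (ψ y) (fun x => p x y)).symm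
  have h1 : (⨆ ψ ∈ Ψ, ⨅ x : X, Lagrangian p y₀ x ψ) = biconj Ψ (optVal p) y₀ := by
    unfold biconj
    exact iSup_congr fun ψ => iSup_congr fun _ => key ψ
  exact ⟨h1, by rw [h1]; rfl⟩
end

section
/- Let X be a Hilbert space and Φ_lsc := {φ : X → ℝ : φ(x) = -a‖x‖² + ⟨ℓ,x⟩ + c, ℓ ∈ X, a ≥ 0, c ∈ ℝ}. A proper function f : X → (-∞,+∞] is Φ_lsc-convex if and only if f is lower semicontinuous on X and there exist a ≥ 0 and c ∈ ℝ such that f(x) ≥ -a‖x‖² - c for all x ∈ X. -/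
/-!
Every member of `Φ_lsc` is continuous and, by Young's inequality `⟨ℓ, x⟩ ≥ -(‖ℓ‖² + ‖x‖²)/2`,
bounded below by `-(a + 1/2)‖x‖² - c'`; so a `Φ_lsc`-convex function, being a supremum of a nonempty
family of them, is lower semicontinuous and has a quadratic minorant. Conversely, given `r < f x₀`,
lower semicontinuity gives `r < f` on a ball around `x₀`, and the quadratic minorant lets the
downward paraboloid `r - M‖x - x₀‖²`, which belongs to `Φ_lsc`, stay below `f` outside that ball
once `M` is large.
-/

section SeminormedAddCommGroup

variable {E : Type*} [SeminormedAddCommGroup E]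

lemma exists_sub_mul_norm_sub_sq_le_of_le_norm_sub {a : ℝ} (ha : 0 ≤ a) (c r : ℝ) (x₀ : E)
    {δ : ℝ} (hδ : 0 < δ) :
    ∃ M, 0 ≤ M ∧ ∀ x, δ ≤ ‖x - x₀‖ → r - M * ‖x - x₀‖ ^ 2 ≤ -a * ‖x‖ ^ 2 - c := by
  set K := max 0 (r + 2 * a * ‖x₀‖ ^ 2 + c)
  refine ⟨2 * a + K / δ ^ 2, by positivity, fun x hx => ?_⟩
  have hK : K ≤ K / δ ^ 2 * ‖x - x₀‖ ^ 2 := by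
    rw [div_mul_eq_mul_div, le_div_iff₀ (by positivity)]
    gcongr
  have hnorm : ‖x‖ ^ 2 ≤ 2 * ‖x - x₀‖ ^ 2 + 2 * ‖x₀‖ ^ 2 := by
    have := norm_le_norm_add_norm_sub' x x₀
    nlinarith [norm_nonneg x, sq_nonneg (‖x - x₀‖ - ‖x₀‖)]
  nlinarith [le_max_right 0 (r + 2 * a * ‖x₀‖ ^ 2 + c), mul_le_mul_of_nonneg_left hnorm ha]

lemma exists_sub_mul_norm_sub_sq_le {f : E → EReal} {x₀ : E} (hf : LowerSemicontinuousAt f x₀)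
    {a c : ℝ} (ha : 0 ≤ a) (hm : ∀ x, ((-a * ‖x‖ ^ 2 - c : ℝ) : EReal) ≤ f x)
    {r : ℝ} (hr : (r : EReal) < f x₀) :
    ∃ M, 0 ≤ M ∧ ∀ x, ((r - M * ‖x - x₀‖ ^ 2 : ℝ) : EReal) ≤ f x := by
  obtain ⟨δ, hδ, hball⟩ := Metric.eventually_nhds_iff.1 (hf r hr)
  obtain ⟨M, hM, hfar⟩ := exists_sub_mul_norm_sub_sq_le_of_le_norm_sub ha c r x₀ hδ
  refine ⟨M, hM, fun x => ?_⟩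
  rcases lt_or_ge ‖x - x₀‖ δ with hnear | hfar'
  · refine le_trans ?_ (hball (by rwa [dist_eq_norm])).le
    exact EReal.coe_le_coe_iff.2 (by nlinarith [sq_nonneg ‖x - x₀‖])
  · exact (EReal.coe_le_coe_iff.2 (hfar x hfar')).trans (hm x)

end SeminormedAddCommGroup

section InnerProductSpace

variable {X : Type*} [NormedAddCommGroup X] [InnerProductSpace ℝ X]

variable (X) in
def phiLsc : Set (X → ℝ) :=
  {φ | ∃ (a : ℝ) (ℓ : X) (c : ℝ), 0 ≤ a ∧ φ = fun x' => -a * ‖x'‖ ^ 2 + inner ℝ ℓ x' + c}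

/-- `f` is `Φ_lsc`-convex iff `f = phiLscEnvelope f`. -/
noncomputable def phiLscEnvelope (f : X → EReal) (x : X) : EReal :=
  ⨆ φ : {φ : X → ℝ // φ ∈ phiLsc X ∧ ∀ x', ((φ x' : EReal) ≤ f x')}, ((φ.1 x : EReal))

lemma continuous_of_mem_phiLsc {φ : X → ℝ} (hφ : φ ∈ phiLsc X) : Continuous φ := by
  obtain ⟨a, ℓ, c, -, rfl⟩ := hφ
  fun_prop

lemma exists_quadratic_minorant_of_mem_phiLsc {φ : X → ℝ} (hφ : φ ∈ phiLsc X) :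
    ∃ a c : ℝ, 0 ≤ a ∧ ∀ x, -a * ‖x‖ ^ 2 - c ≤ φ x := by
  obtain ⟨a, ℓ, c, ha, rfl⟩ := hφ
  refine ⟨a + 1 / 2, ‖ℓ‖ ^ 2 / 2 - c, by positivity, fun x => ?_⟩
  have hinner : -(‖ℓ‖ * ‖x‖) ≤ inner ℝ ℓ x := (abs_le.1 (abs_real_inner_le_norm ℓ x)).1
  nlinarith [sq_nonneg (‖ℓ‖ - ‖x‖)]

lemma sub_mul_norm_sub_sq_mem_phiLsc (r : ℝ) (x₀ : X) {M : ℝ} (hM : 0 ≤ M) :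
    (fun x => r - M * ‖x - x₀‖ ^ 2) ∈ phiLsc X := by
  refine ⟨M, (2 * M) • x₀, r - M * ‖x₀‖ ^ 2, hM, funext fun x => ?_⟩
  rw [norm_sub_sq_real, real_inner_smul_left, real_inner_comm]
  ring

lemma lowerSemicontinuous_phiLscEnvelope (f : X → EReal) :
    LowerSemicontinuous (phiLscEnvelope f) :=
  lowerSemicontinuous_iSup fun φ =>
    (continuous_coe_real_ereal.comp (continuous_of_mem_phiLsc φ.2.1)).lowerSemicontinuous

lemma phiLscEnvelope_le (f : X → EReal) (x : X) : phiLscEnvelope f x ≤ f x :=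
  iSup_le fun φ => φ.2.2 x

lemma le_phiLscEnvelope {f : X → EReal} {φ : X → ℝ} (hφ : φ ∈ phiLsc X)
    (hle : ∀ x, (φ x : EReal) ≤ f x) (x : X) : (φ x : EReal) ≤ phiLscEnvelope f x :=
  le_iSup (fun ψ : {φ : X → ℝ // φ ∈ phiLsc X ∧ ∀ x', ((φ x' : EReal) ≤ f x')} => (ψ.1 x : EReal))
    ⟨φ, hφ, hle⟩

lemma exists_mem_phiLsc_le_of_phiLscEnvelope_ne_bot {f : X → EReal} {x : X}
    (hx : phiLscEnvelope f x ≠ ⊥) : ∃ φ ∈ phiLsc X, ∀ x', (φ x' : EReal) ≤ f x' := by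
  by_contra h
  exact hx (iSup_eq_bot.2 fun φ => absurd ⟨φ.1, φ.2⟩ h)

end InnerProductSpace

theorem phiLsc_convex_iff_lsc_and_quadratic_minorant_general
    {X : Type*} [NormedAddCommGroup X] [InnerProductSpace ℝ X]
    (f : X → EReal) (hbot : ∀ x, f x ≠ ⊥) :
    (∀ x : X, f x = ⨆ φ : {φ : X → ℝ //
        (∃ (a : ℝ) (ℓ : X) (c : ℝ), 0 ≤ a ∧
          φ = fun x' => -a * ‖x'‖ ^ 2 + inner ℝ ℓ x' + c) ∧
        ∀ x', ((φ x' : EReal) ≤ f x')}, ((φ.1 x : EReal))) ↔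
      (LowerSemicontinuous f ∧
        ∃ (a c : ℝ), 0 ≤ a ∧ ∀ x : X, ((-a * ‖x‖ ^ 2 - c : ℝ) : EReal) ≤ f x) := by
  change (∀ x, f x = phiLscEnvelope f x) ↔ _
  constructor
  · intro hf
    refine ⟨funext hf ▸ lowerSemicontinuous_phiLscEnvelope f, ?_⟩
    obtain ⟨φ, hφ, hle⟩ := exists_mem_phiLsc_le_of_phiLscEnvelope_ne_bot (hf 0 ▸ hbot 0)
    obtain ⟨a, c, ha, hac⟩ := exists_quadratic_minorant_of_mem_phiLsc hφ
    exact ⟨a, c, ha, fun x => (EReal.coe_le_coe_iff.2 (hac x)).trans (hle x)⟩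
  · rintro ⟨hlsc, a, c, ha, hm⟩ x₀
    refine le_antisymm (EReal.ge_of_forall_gt_iff_ge.1 fun r hr => ?_) (phiLscEnvelope_le f x₀)
    obtain ⟨M, hM, hle⟩ := exists_sub_mul_norm_sub_sq_le (hlsc x₀) ha hm hr
    simpa using le_phiLscEnvelope (sub_mul_norm_sub_sq_mem_phiLsc r x₀ hM) hle x₀

theorem phiLsc_convex_iff_lsc_and_quadratic_minorant
    {X : Type*} [NormedAddCommGroup X] [InnerProductSpace ℝ X] [CompleteSpace X]
    (f : X → EReal) (hbot : ∀ x, f x ≠ ⊥) (hproper : ∃ x, f x ≠ ⊤) :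
    (∀ x : X, f x = ⨆ φ : {φ : X → ℝ //
        (∃ (a : ℝ) (ℓ : X) (c : ℝ), 0 ≤ a ∧
          φ = fun x' => -a * ‖x'‖ ^ 2 + inner ℝ ℓ x' + c) ∧
        ∀ x', ((φ x' : EReal) ≤ f x')}, ((φ.1 x : EReal))) ↔
      (LowerSemicontinuous f ∧
        ∃ (a c : ℝ), 0 ≤ a ∧ ∀ x : X, ((-a * ‖x‖ ^ 2 - c : ℝ) : EReal) ≤ f x) :=
  phiLsc_convex_iff_lsc_and_quadratic_minorant_general f hbot
end

section
/- Let X be a set, (Y,d) a metric space, f : X → (-∞,+∞] proper, A : Y ⇉ X a set-valued map with G := A⁻¹ having closed values, y₀ ∈ Y, and p(x,y) = f(x) if x ∈ A(y), +∞ otherwise. For the multiplier class Ψ_d = {ψ(y) = -a·d(y,ȳ) + c : ȳ ∈ Y, a > 0, c ∈ ℝ} and Lagrangian L(x,ȳ,a) = -a·d(y₀,ȳ) + f(x) + inf_{y∈G(x)} a·d(y,ȳ), it holds that sup_{(ȳ,a)∈Y×ℝ₊} L(x,ȳ,a) = f(x) if x ∈ A(y₀) and = +∞ if x ∉ A(y₀)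 (assuming f(x) < +∞ in the latter case gives +∞; the formula holds for all x with G(x) closed and nonempty). -/
/-!
If `x ∈ A y₀`, then `y₀ ∈ G(x)`, so `inf_{y ∈ G(x)} d(y, ȳ) ≤ d(y₀, ȳ)` and every term of the supremum
is at most `f x`, with equality at `ȳ = y₀`. If `x ∉ A y₀`, closedness and nonemptiness of `G(x)`
give `r := inf_{y ∈ G(x)} d(y, y₀) > 0`; at `ȳ = y₀` the terms are `a r + f x`, unbounded in `a > 0`
as long as `f x ≠ ⊥`.
-/

open Metric

lemma neg_mul_dist_add_mul_infDist_nonpos {Y : Type*} [PseudoMetricSpace Y] {s : Set Y} {y₀ : Y}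
    (h : y₀ ∈ s) (ybar : Y) {a : ℝ} (ha : 0 ≤ a) :
    -a * dist y₀ ybar + a * infDist ybar s ≤ 0 := by
  have hle : infDist ybar s ≤ dist y₀ ybar := dist_comm ybar y₀ ▸ infDist_le_dist_of_mem h
  linarith [mul_le_mul_of_nonneg_left hle ha]

lemma EReal.iSup_pos_mul_add_eq_top {r : ℝ} (hr : 0 < r) {c : EReal} (hc : c ≠ ⊥) :
    ⨆ a : {a : ℝ // 0 < a}, ((a.1 * r : ℝ) : EReal) + c = ⊤ := by
  induction c using EReal.rec with
  | bot => exact absurd rfl hc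
  | top => exact iSup_eq_top.2 fun b hb => ⟨⟨1, one_pos⟩, by simpa using hb⟩
  | coe c =>
    refine iSup_eq_top.2 fun b hb => ?_
    obtain ⟨B, hB, -⟩ := EReal.lt_iff_exists_real_btwn.1 hb
    refine ⟨⟨(|B - c| + 1) / r, by positivity⟩, hB.trans ?_⟩
    have key : B < (|B - c| + 1) / r * r + c := by
      rw [div_mul_cancel₀ _ hr.ne']
      linarith [le_abs_self (B - c)]
    exact_mod_cast key

open scoped Classical in
theorem sup_lagrangian_psiD_eq_primal_general
    {X Y : Type*} [MetricSpace Y]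
    (f : X → EReal) (hbot : ∀ x, f x ≠ ⊥)
    (A : Y → Set X) (y₀ : Y)
    (hGne : ∀ x : X, {y : Y | x ∈ A y}.Nonempty)
    (hGcl : ∀ x : X, IsClosed {y : Y | x ∈ A y}) :
    ∀ x : X,
      (⨆ ybar : Y, ⨆ a : {a : ℝ // 0 < a},
        ((-(a.1) * dist y₀ ybar + a.1 * Metric.infDist ybar {y : Y | x ∈ A y} : ℝ) : EReal)
          + f x) =
      (if x ∈ A y₀ then f x else ⊤) := by
  intro x
  by_cases hx : x ∈ A y₀
  · rw [if_pos hx]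
    refine le_antisymm (iSup₂_le fun ybar a => ?_) ?_
    · have hnonpos := neg_mul_dist_add_mul_infDist_nonpos (s := {y | x ∈ A y}) hx ybar a.2.le
      calc _ ≤ (0 : EReal) + f x := by gcongr; exact_mod_cast hnonpos
        _ = f x := zero_add _
    · refine le_iSup₂_of_le y₀ ⟨1, one_pos⟩ ?_
      simp [infDist_zero_of_mem (show y₀ ∈ {y | x ∈ A y} from hx)]
  · have hr : 0 < infDist y₀ {y | x ∈ A y} := ((hGcl x).notMem_iff_infDist_pos (hGne x)).1 hx
    rw [if_neg hx, eq_top_iff, ← EReal.iSup_pos_mul_add_eq_top hr (hbot x)]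
    exact le_iSup_of_le y₀ (iSup_mono fun a => by simp)

open scoped Classical in
theorem sup_lagrangian_psiD_eq_primal
    {X Y : Type*} [Nonempty X] [MetricSpace Y]
    (f : X → EReal) (hbot : ∀ x, f x ≠ ⊥) (hproper : ∃ x, f x ≠ ⊤)
    (A : Y → Set X) (y₀ : Y)
    (hGne : ∀ x : X, {y : Y | x ∈ A y}.Nonempty)
    (hGcl : ∀ x : X, IsClosed {y : Y | x ∈ A y}) :
    ∀ x : X,
      (⨆ ybar : Y, ⨆ a : {a : ℝ // 0 < a},
        ((-(a.1) * dist y₀ ybar + a.1 * Metric.infDist ybar {y : Y | x ∈ A y} : ℝ) : EReal)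
          + f x) =
      (if x ∈ A y₀ then f x else ⊤) :=
  sup_lagrangian_psiD_eq_primal_general f hbot A y₀ hGne hGcl
end

section
/- Let X be a real Hilbert space and C ⊆ X a set that is Φ_lsc-separated: for every p ∉ C there exist a ≥ 0, u ∈ X, c ∈ ℝ such that -a‖p‖² + ⟨u,p⟩ + c > 0 and -a‖y‖² + ⟨u,y⟩ + c ≤ 0 for all y ∈ C. Then for any y₀ ∈ X: sup over (a,u) ∈ ℝ₊ × X of [(-a‖y₀‖² + ⟨u,y₀⟩) - sup_{y∈C}(-a‖y‖² + ⟨u,y⟩)] equals 0 if y₀ ∈ C and +∞ if y₀ ∉ C. -/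
/-!
If `y₀ ∈ C`, every term is `≤ 0` because `y₀` competes in the inner supremum, and `(a, u) = (0, 0)`
gives `0`. If `y₀ ∉ C`, take a separating `φ` with `φ(y₀) = ε > 0` and `φ ≤ 0` on `C`; scaling
`(a, u, c)` by `t ≥ 0` stays in the cone `ℝ₊ × X` and scales `φ`, so the term at `(t a, t u)` is at
least `t ε`.
-/

section Gap

variable {α : Type*} (f : α → ℝ) {C : Set α} {x : α}

theorem EReal.coe_sub_iSup_nonpos_of_mem (hx : x ∈ C) :
    (f x : EReal) - ⨆ y : C, (f y : EReal) ≤ 0 :=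
  EReal.sub_nonpos.2 (le_iSup (fun y : C => (f y : EReal)) ⟨x, hx⟩)

theorem EReal.coe_add_le_coe_sub_iSup {c : ℝ} (hC : ∀ y ∈ C, f y + c ≤ 0) :
    ((f x + c : ℝ) : EReal) ≤ (f x : EReal) - ⨆ y : C, (f y : EReal) := by
  have hsup : ⨆ y : C, (f y : EReal) ≤ ((-c : ℝ) : EReal) :=
    iSup_le fun y => EReal.coe_le_coe_iff.2 (by linarith [hC y y.2])
  calc ((f x + c : ℝ) : EReal) = (f x : EReal) - ((-c : ℝ) : EReal) := by
        rw [← EReal.coe_sub, sub_neg_eq_add]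
    _ ≤ (f x : EReal) - ⨆ y : C, (f y : EReal) := EReal.sub_le_sub le_rfl hsup

end Gap

section Quadratic

variable {X : Type*} [NormedAddCommGroup X] [InnerProductSpace ℝ X]

def quadraticFn (a : ℝ) (u y : X) : ℝ := -a * ‖y‖ ^ 2 + inner ℝ u y

theorem quadraticFn_mul_smul (t a : ℝ) (u y : X) :
    quadraticFn (t * a) (t • u) y = t * quadraticFn a u y := by
  simp only [quadraticFn, real_inner_smul_left]
  ring

theorem iSup_quadraticFn_gap_eq_top {C : Set X} {y₀ : X} {a c : ℝ} {u : X} (ha : 0 ≤ a)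
    (hy₀ : 0 < quadraticFn a u y₀ + c) (hC : ∀ y ∈ C, quadraticFn a u y + c ≤ 0) :
    ⨆ au : {a : ℝ // 0 ≤ a} × X, ((quadraticFn au.1.1 au.2 y₀ : EReal) -
      ⨆ y : C, (quadraticFn au.1.1 au.2 y : EReal)) = ⊤ := by
  refine (EReal.eq_top_iff_forall_lt _).2 fun M => ?_
  obtain ⟨n, hn⟩ := exists_nat_gt (M / (quadraticFn a u y₀ + c))
  have hn0 : (0 : ℝ) ≤ n := n.cast_nonneg
  refine lt_iSup_iff.2 ⟨(⟨n * a, mul_nonneg hn0 ha⟩, (n : ℝ) • u), ?_⟩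
  have hCn : ∀ y ∈ C, quadraticFn (n * a) ((n : ℝ) • u) y + n * c ≤ 0 := fun y hy => by
    rw [quadraticFn_mul_smul, ← mul_add]
    exact mul_nonpos_of_nonneg_of_nonpos hn0 (hC y hy)
  refine lt_of_lt_of_le ?_ (EReal.coe_add_le_coe_sub_iSup _ hCn)
  rw [EReal.coe_lt_coe_iff, quadraticFn_mul_smul, ← mul_add]
  exact (div_lt_iff₀ hy₀).1 hn

end Quadratic

open scoped Classical in
theorem sup_quadratic_separation_eq_indicator_general
    {X : Type*} [NormedAddCommGroup X] [InnerProductSpace ℝ X]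
    (C : Set X)
    (hsep : ∀ p : X, p ∉ C → ∃ (a : ℝ) (u : X) (c : ℝ), 0 ≤ a ∧
      0 < -a * ‖p‖ ^ 2 + inner ℝ u p + c ∧
      ∀ y ∈ C, -a * ‖y‖ ^ 2 + inner ℝ u y + c ≤ 0)
    (y₀ : X) :
    (⨆ au : {a : ℝ // 0 ≤ a} × X,
        (((-(au.1.1) * ‖y₀‖ ^ 2 + inner ℝ au.2 y₀ : ℝ) : EReal) -
          ⨆ y : C, ((-(au.1.1) * ‖(y : X)‖ ^ 2 + inner ℝ au.2 (y : X) : ℝ) : EReal))) =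
      (if y₀ ∈ C then (0 : EReal) else ⊤) := by
  by_cases hy : y₀ ∈ C
  · rw [if_pos hy]
    refine le_antisymm
      (iSup_le fun au => EReal.coe_sub_iSup_nonpos_of_mem (quadraticFn au.1.1 au.2) hy) ?_
    have hzero : ∀ y ∈ C, quadraticFn 0 (0 : X) y + 0 ≤ 0 := fun y _ => by simp [quadraticFn]
    refine le_iSup_of_le (⟨0, le_rfl⟩, 0) ?_
    refine Eq.trans_le ?_ (EReal.coe_add_le_coe_sub_iSup (x := y₀) _ hzero)
    simp [quadraticFn]
  · rw [if_neg hy]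
    obtain ⟨a, u, c, ha, hy₀, hC⟩ := hsep y₀ hy
    exact iSup_quadraticFn_gap_eq_top ha hy₀ hC

open scoped Classical in
theorem sup_quadratic_separation_eq_indicator
    {X : Type*} [NormedAddCommGroup X] [InnerProductSpace ℝ X] [CompleteSpace X]
    (C : Set X) (hCne : C.Nonempty)
    (hsep : ∀ p : X, p ∉ C → ∃ (a : ℝ) (u : X) (c : ℝ), 0 ≤ a ∧
      0 < -a * ‖p‖ ^ 2 + inner ℝ u p + c ∧
      ∀ y ∈ C, -a * ‖y‖ ^ 2 + inner ℝ u y + c ≤ 0)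
    (y₀ : X) :
    (⨆ au : {a : ℝ // 0 ≤ a} × X,
        (((-(au.1.1) * ‖y₀‖ ^ 2 + inner ℝ au.2 y₀ : ℝ) : EReal) -
          ⨆ y : C, ((-(au.1.1) * ‖(y : X)‖ ^ 2 + inner ℝ au.2 (y : X) : ℝ) : EReal))) =
      (if y₀ ∈ C then (0 : EReal) else ⊤) :=
  sup_quadratic_separation_eq_indicator_general C hsep y₀
end

section
/- Let X be a nonempty set, (Y,d) a metric space, Ψ a class of continuous real-valued functions on Y with the peaking property at y₀, p : X × Y → (-∞,+∞] with p(x,·) Ψ-convex at y₀ for all x, and V(y) = inf_{x∈X} p(x,y), and assume there exists ψ̄ ∈ Ψ with V ≥ ψ̄. If for every α < inf_{x∈X} sup_{ψ∈Ψ} L(x,ψ) there exist ψ₁,ψ₂ ∈ Ψ, φ₁ ∈ supp L(·,ψ₁), φ₂ ∈ supp L(·,ψ₂) and t₀ ∈ [0,1] with t₀φ₁ + (1-t₀)φ₂ ≥ α on X, then V is lower semicontinuous at y₀. -/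
/-- A family `Ψ` of functions on a metric space has the peaking property at `y₀`. -/
def PeakingProperty {Y : Type*} [MetricSpace Y] (Ψ : Set (Y → ℝ)) (y₀ : Y) : Prop :=
  ∀ ε > (0:ℝ), ∀ δ > (0:ℝ), ∀ K > (0:ℝ), ∀ ψ ∈ Ψ, ∃ ψbar ∈ Ψ,
    (∀ y : Y, ψbar y ≤ ε) ∧ (∀ y : Y, dist y y₀ ≥ δ → ψbar y ≤ ψ y - K)

private lemma aux1 (a b : ℝ) (e : EReal) :
    (a : EReal) - ((b : EReal) - e) ≤ ((a - b : ℝ) : EReal) + e := by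
  induction e with
  | bot => simp
  | coe c =>
    apply le_of_eq
    norm_cast
    ring
  | top => simp [← EReal.coe_sub]

private lemma aux2 (c d : ℝ) (e : EReal) (h : (c : EReal) ≤ (d : EReal) + e) :
    ((c - d : ℝ) : EReal) ≤ e := by
  induction e with
  | bot => simp at h
  | coe b =>
    norm_cast at h ⊢
    linarith
  | top => simp

theorem optimal_value_lsc_of_intersection_property
    {X Y : Type*} [Nonempty X] [MetricSpace Y]
    (Φ : Set (X → ℝ)) (Ψ : Set (Y → ℝ)) (y₀ : Y)
    (hcont : ∀ ψ ∈ Ψ, Continuous ψ)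
    (hpeak : PeakingProperty Ψ y₀)
    (p : X → Y → EReal)
    (hconv : ∀ x : X, p x y₀ = ⨆ ψ ∈ Ψ, Lagrangian p y₀ x ψ)
    (hminor : ∃ ψbar ∈ Ψ, ∀ y : Y, ((ψbar y : EReal) ≤ ⨅ x : X, p x y))
    (hint : ∀ α : ℝ, (α : EReal) < ⨅ x : X, ⨆ ψ ∈ Ψ, Lagrangian p y₀ x ψ →
      ∃ ψ₁ ∈ Ψ, ∃ ψ₂ ∈ Ψ, ∃ φ₁ ∈ Φ, ∃ φ₂ ∈ Φ,
        (∀ x, ((φ₁ x : EReal) ≤ Lagrangian p y₀ x ψ₁)) ∧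
        (∀ x, ((φ₂ x : EReal) ≤ Lagrangian p y₀ x ψ₂)) ∧
        ∃ t₀ ∈ Set.Icc (0:ℝ) 1, ∀ x : X, α ≤ t₀ * φ₁ x + (1 - t₀) * φ₂ x) :
    LowerSemicontinuousAt (fun y => ⨅ x : X, p x y) y₀ := by
  intro b hb
  simp only at hb
  obtain ⟨α, hbα, hα⟩ := EReal.exists_between_coe_real hb
  have hval : (⨅ x : X, p x y₀) = ⨅ x : X, ⨆ ψ ∈ Ψ, Lagrangian p y₀ x ψ :=
    iInf_congr hconv
  rw [hval] at hα
  obtain ⟨ψ₁, hψ₁, ψ₂, hψ₂, φ₁, -, φ₂, -, h1, h2, t₀, ht₀, hcomb⟩ := hint α hα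
  set g : Y → ℝ := fun y => t₀ * (ψ₁ y - ψ₁ y₀) + (1 - t₀) * (ψ₂ y - ψ₂ y₀) with hg
  have hgc : Continuous g := by
    apply Continuous.add
    · exact continuous_const.mul (((hcont ψ₁ hψ₁)).sub continuous_const)
    · exact continuous_const.mul (((hcont ψ₂ hψ₂)).sub continuous_const)
  have hgy₀ : g y₀ = 0 := by simp [hg]
  -- key pointwise lower bound
  have key : ∀ y : Y, ∀ x : X, ((α + g y : ℝ) : EReal) ≤ p x y := by
    intro y x
    have hL : ∀ ψ : Y → ℝ, Lagrangian p y₀ x ψ ≤ ((ψ y₀ - ψ y : ℝ) : EReal) + p x y := by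
      intro ψ
      refine le_trans (EReal.sub_le_sub le_rfl (le_iSup (fun y' => ((ψ y' : EReal) - p x y')) y))
        (aux1 _ _ _)
    have r1 : ((φ₁ x + ψ₁ y - ψ₁ y₀ : ℝ) : EReal) ≤ p x y := by
      have h := aux2 (φ₁ x) (ψ₁ y₀ - ψ₁ y) (p x y) ((h1 x).trans (hL ψ₁))
      have he : φ₁ x + ψ₁ y - ψ₁ y₀ = φ₁ x - (ψ₁ y₀ - ψ₁ y) := by ring
      rwa [he]
    have r2 : ((φ₂ x + ψ₂ y - ψ₂ y₀ : ℝ) : EReal) ≤ p x y := by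
      have h := aux2 (φ₂ x) (ψ₂ y₀ - ψ₂ y) (p x y) ((h2 x).trans (hL ψ₂))
      have he : φ₂ x + ψ₂ y - ψ₂ y₀ = φ₂ x - (ψ₂ y₀ - ψ₂ y) := by ring
      rwa [he]
    set r₁ := φ₁ x + ψ₁ y - ψ₁ y₀ with hr₁
    set r₂ := φ₂ x + ψ₂ y - ψ₂ y₀ with hr₂
    have hreal : α + g y ≤ max r₁ r₂ := by
      obtain ⟨ht0, ht1⟩ := ht₀
      have hx := hcomb x
      have m1 : t₀ * r₁ ≤ t₀ * max r₁ r₂ :=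
        mul_le_mul_of_nonneg_left (le_max_left _ _) ht0
      have m2 : (1 - t₀) * r₂ ≤ (1 - t₀) * max r₁ r₂ :=
        mul_le_mul_of_nonneg_left (le_max_right _ _) (by linarith)
      rw [hr₁, hr₂] at m1 m2
      simp only [hg]
      nlinarith [m1, m2]
    calc ((α + g y : ℝ) : EReal) ≤ ((max r₁ r₂ : ℝ) : EReal) := by exact_mod_cast hreal
      _ ≤ p x y := by
        rcases max_choice r₁ r₂ with h | h <;> rw [h] <;> assumption
  have keyV : ∀ y : Y, ((α + g y : ℝ) : EReal) ≤ ⨅ x : X, p x y :=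
    fun y => le_iInf (key y)
  induction b with
  | bot =>
    exact Filter.Eventually.of_forall fun y =>
      lt_of_lt_of_le (EReal.bot_lt_coe _) (keyV y)
  | coe β =>
    have hβα : β < α := by exact_mod_cast hbα
    have hev : ∀ᶠ y in nhds y₀, β - α < g y := by
      have := hgc.continuousAt (x := y₀)
      exact this.eventually (eventually_gt_nhds (by rw [hgy₀]; linarith))
    filter_upwards [hev] with y hy
    calc ((β : ℝ) : EReal) < ((α + g y : ℝ) : EReal) := by
          exact_mod_cast (by linarith : β < α + g y)
      _ ≤ _ := keyV y
  | top => exact absurd hbα (by simp)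
end
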